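/- arXiv:math/0402082 — 5 statements merged into one kernel-verified Lean document; each statement's English description precedes it below -/
import Mathlib

section
/- For every positive integer k, gcd(k, binomial(k,2), binomial(k,3)) = k / (gcd(2,k) · gcd(3,k)). -/
private lemma e2' (k : ℕ) : 2 * k.choose 2 = k * (k-1) := by
  have h := Nat.descFactorial_eq_factorial_mul_choose k 2
  rw [show Nat.descFactorial k 2 = (k-1)*(k*1) from rfl,
      show Nat.factorial 2 = 2 from rfl] at h
  rw [← h]; ring

private lemma e3' (k : ℕ) : 6 * k.choose 3 = k * (k-1) * (k-2) := by
  have h := Nat.descFactorial_eq_factorial_mul_choose k 3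
  rw [show Nat.descFactorial k 3 = (k-2)*((k-1)*(k*1)) from rfl,
      show Nat.factorial 3 = 6 from rfl] at h
  rw [← h]; ring

private lemma dvd_choose_two' {k m : ℕ} (h : 2*m ∣ k*(k-1)) : m ∣ k.choose 2 := by
  rw [← e2' k] at h
  exact (Nat.mul_dvd_mul_iff_left (by norm_num : (0:ℕ) < 2)).mp h

private lemma dvd_choose_three' {k m : ℕ} (h : 6*m ∣ k*(k-1)*(k-2)) : m ∣ k.choose 3 := by
  rw [← e3' k] at h
  exact (Nat.mul_dvd_mul_iff_left (by norm_num : (0:ℕ) < 6)).mp h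

private lemma aux2' (k : ℕ) (h : ¬ 2 ∣ k) : 2 ∣ (k-1) := by omega

private lemma aux3' (k : ℕ) (h : ¬ 3 ∣ k) : 3 ∣ (k-1)*(k-2) := by
  rcases (by omega : k % 3 = 1 ∨ k % 3 = 2) with h1 | h1
  · exact Dvd.dvd.mul_right (by omega : 3 ∣ (k-1)) _
  · exact Dvd.dvd.mul_left (by omega : 3 ∣ (k-2)) _

/-- For every positive integer `k`, `gcd(k, C(k,2), C(k,3)) = k / (gcd(2,k) * gcd(3,k))`. -/
theorem gcd_choose_two_three (k : ℕ) (hk : 0 < k) :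
    Nat.gcd k (Nat.gcd (k.choose 2) (k.choose 3)) = k / (Nat.gcd 2 k * Nat.gcd 3 k) := by
  set g := Nat.gcd k (Nat.gcd (k.choose 2) (k.choose 3)) with hg
  have hgk : g ∣ k := Nat.gcd_dvd_left _ _
  have hg2 : g ∣ k.choose 2 := (Nat.gcd_dvd_right _ _).trans (Nat.gcd_dvd_left _ _)
  have hg3 : g ∣ k.choose 3 := (Nat.gcd_dvd_right _ _).trans (Nat.gcd_dvd_right _ _)
  have hc1 : Nat.Coprime g (k-1) := by
    have hkk : Nat.Coprime k (k-1) := by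
      have h1 := Nat.dvd_sub (Nat.gcd_dvd_left k (k-1)) (Nat.gcd_dvd_right k (k-1))
      rw [show k - (k-1) = 1 by omega] at h1
      exact Nat.dvd_one.mp h1
    exact Nat.Coprime.coprime_dvd_left hgk hkk
  -- 2 ∣ k → 2*g ∣ k
  have h2 : 2 ∣ k → 2*g ∣ k := by
    intro h2k
    have heq : (k/2)*(k-1) = k.choose 2 := by
      have h1 : 2*((k/2)*(k-1)) = 2*k.choose 2 := by
        rw [e2' k, ← mul_assoc, Nat.mul_div_cancel' h2k]
      omega
    have hdd : g ∣ (k/2)*(k-1) := by rw [heq]; exact hg2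
    have : g ∣ k/2 := hc1.dvd_of_dvd_mul_right hdd
    exact (Nat.dvd_div_iff_mul_dvd h2k).mp this
  -- 3 ∣ k → 3*g ∣ k
  have h3 : 3 ∣ k → 3*g ∣ k := by
    intro h3k
    have hk3 : 3 ≤ k := Nat.le_of_dvd hk h3k
    have hgcd2 : Nat.gcd g (k-2) ∣ 2 := by
      have ha : Nat.gcd g (k-2) ∣ k := (Nat.gcd_dvd_left _ _).trans hgk
      have hb : Nat.gcd g (k-2) ∣ k-2 := Nat.gcd_dvd_right _ _
      have hc := Nat.dvd_sub ha hb
      rwa [show k - (k-2) = 2 by omega] at hc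
    have key : g ∣ (k/3) * (k-1) * (k-2) := by
      have h1 : 3 * ((k/3) * (k-1) * (k-2)) = 3 * (2 * k.choose 3) := by
        rw [show (3:ℕ) * (2 * k.choose 3) = 6 * k.choose 3 by ring, e3' k,
            ← mul_assoc, ← mul_assoc, Nat.mul_div_cancel' h3k]
      have h2' : (k/3) * (k-1) * (k-2) = 2 * k.choose 3 := by omega
      rw [h2']
      exact hg3.mul_left 2
    have key2 : g ∣ (k/3) * (k-2) := by
      refine hc1.dvd_of_dvd_mul_right ?_
      rwa [show (k/3)*(k-2)*(k-1) = (k/3)*(k-1)*(k-2) by ring]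
    have key3 : g ∣ (k/3) * 2 := by
      have hA : g ∣ Nat.gcd ((k/3)*(k-2)) ((k/3)*g) :=
        Nat.dvd_gcd key2 (dvd_mul_left g (k/3))
      rw [Nat.gcd_mul_left] at hA
      refine hA.trans (Nat.mul_dvd_mul_left _ ?_)
      rwa [Nat.gcd_comm]
    have h2k' : 3*g ∣ 2*k := by
      have hB : 3*g ∣ 3*((k/3)*2) := Nat.mul_dvd_mul_left 3 key3
      have hC : 3*((k/3)*2) = 2*k := by
        rw [← mul_assoc, Nat.mul_div_cancel' h3k]; ring
      rwa [hC] at hB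
    have h3k' : 3*g ∣ 3*k := Nat.mul_dvd_mul_left 3 hgk
    have hD : 3*g ∣ Nat.gcd (2*k) (3*k) := Nat.dvd_gcd h2k' h3k'
    rwa [Nat.gcd_mul_right, show Nat.gcd 2 3 = 1 from rfl, one_mul] at hD
  by_cases h2k : 2 ∣ k <;> by_cases h3k : 3 ∣ k
  · -- 6 ∣ k
    have h6k : (6:ℕ) ∣ k :=
      Nat.Coprime.mul_dvd_of_dvd_of_dvd (by norm_num) h2k h3k
    rw [Nat.gcd_eq_left h2k, Nat.gcd_eq_left h3k]
    have h6g : 2*3*g ∣ k := by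
      have := Nat.lcm_dvd (h2 h2k) (h3 h3k)
      rwa [Nat.lcm_mul_right, show Nat.lcm 2 3 = 6 from rfl] at this
    refine Nat.dvd_antisymm ((Nat.dvd_div_iff_mul_dvd (by norm_num at h6k ⊢; exact h6k)).mpr h6g) ?_
    refine Nat.dvd_gcd ?_ (Nat.dvd_gcd ?_ ?_)
    · exact Nat.div_dvd_of_dvd (by norm_num; exact h6k)
    · apply dvd_choose_two'
      have h1 : 2*(k/(2*3)) ∣ 6*(k/(2*3)) :=
        Nat.mul_dvd_mul_right (by norm_num) _
      have h2' : 6*(k/(2*3)) = k := by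
        rw [show (2:ℕ)*3 = 6 from rfl, Nat.mul_div_cancel' h6k]
      rw [h2'] at h1
      exact h1.trans (dvd_mul_right k (k-1))
    · apply dvd_choose_three'
      have h2' : 6*(k/(2*3)) = k := by
        rw [show (2:ℕ)*3 = 6 from rfl, Nat.mul_div_cancel' h6k]
      rw [h2']
      exact (dvd_mul_right k (k-1)).mul_right (k-2)
  · -- 2 ∣ k, ¬ 3 ∣ k
    rw [Nat.gcd_eq_left h2k, (Nat.prime_three.coprime_iff_not_dvd.mpr h3k : Nat.gcd 3 k = 1),
        mul_one]
    refine Nat.dvd_antisymm ((Nat.dvd_div_iff_mul_dvd h2k).mpr (h2 h2k)) ?_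
    refine Nat.dvd_gcd (Nat.div_dvd_of_dvd h2k) (Nat.dvd_gcd ?_ ?_)
    · apply dvd_choose_two'
      rw [Nat.mul_div_cancel' h2k]
      exact dvd_mul_right k (k-1)
    · apply dvd_choose_three'
      have e : 6*(k/2) = k*3 := by
        rw [show (6:ℕ) = 3*2 from rfl, mul_assoc, Nat.mul_div_cancel' h2k]; ring
      rw [e, mul_assoc]
      exact mul_dvd_mul_left k (aux3' k h3k)
  · -- ¬ 2 ∣ k, 3 ∣ k
    rw [(Nat.prime_two.coprime_iff_not_dvd.mpr h2k : Nat.gcd 2 k = 1), Nat.gcd_eq_left h3k,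
        one_mul]
    refine Nat.dvd_antisymm ((Nat.dvd_div_iff_mul_dvd h3k).mpr (h3 h3k)) ?_
    refine Nat.dvd_gcd (Nat.div_dvd_of_dvd h3k) (Nat.dvd_gcd ?_ ?_)
    · apply dvd_choose_two'
      rw [mul_comm]
      exact mul_dvd_mul (Nat.div_dvd_of_dvd h3k) (aux2' k h2k)
    · apply dvd_choose_three'
      have e : 6*(k/3) = k*2 := by
        rw [show (6:ℕ) = 2*3 from rfl, mul_assoc, Nat.mul_div_cancel' h3k]; ring
      rw [e, mul_assoc]
      exact mul_dvd_mul_left k (dvd_mul_of_dvd_left (aux2' k h2k) _)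
  · -- ¬ 2 ∣ k, ¬ 3 ∣ k
    rw [(Nat.prime_two.coprime_iff_not_dvd.mpr h2k : Nat.gcd 2 k = 1),
        (Nat.prime_three.coprime_iff_not_dvd.mpr h3k : Nat.gcd 3 k = 1),
        mul_one, Nat.div_one]
    refine Nat.dvd_antisymm hgk ?_
    refine Nat.dvd_gcd dvd_rfl (Nat.dvd_gcd ?_ ?_)
    · apply dvd_choose_two'
      rw [mul_comm]
      exact mul_dvd_mul_left k (aux2' k h2k)
    · apply dvd_choose_three'
      have h6 : 6 ∣ (k-1)*(k-2) := by
        refine Nat.Coprime.mul_dvd_of_dvd_of_dvd (show Nat.Coprime 2 3 by norm_num) ?_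
          (aux3' k h3k)
        exact dvd_mul_of_dvd_left (aux2' k h2k) _
      rw [mul_comm 6 k, mul_assoc]
      exact mul_dvd_mul_left k h6
end

section
/- Let k be a positive integer, g₁₂ = gcd(k, binomial(k,2)) and g₁₂₃ = gcd(k, binomial(k,2), binomial(k,3)). Then 3·g₁₂₃/g₁₂ is an integer and gcd(3·g₁₂₃/g₁₂, g₁₂₃) = 1. -/
/-!
Since `3·C(k,3) = C(k,2)·(k-2)`, `g₁₂` divides `gcd(3 g₁₂, 3 C(k,3)) = 3 g₁₂₃`, and as `g₁₂₃ ∣ g₁₂`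
the quotient `3 g₁₂₃ / g₁₂` is `1` or `3`. It is `3` only when `g₁₂ = g₁₂₃`, i.e. `g₁₂ ∣ C(k,3)`;
this fails when `3 ∣ k`, because then the full power `3^a ∥ k` divides `g₁₂` while `3^a ∤ C(k,3)`,
as `k - 1` and `k - 2` are prime to `3`.
-/

namespace Nat

theorem choose_two_mul_two (k : ℕ) : k.choose 2 * 2 = k * (k - 1) := by
  simpa using choose_succ_right_eq k 1

theorem choose_three_mul_three (k : ℕ) : k.choose 3 * 3 = k.choose 2 * (k - 2) :=
  choose_succ_right_eq k 2

theorem dvd_choose_two_of_dvd {n k : ℕ} (hn : n.Coprime 2) (h : n ∣ k) : n ∣ k.choose 2 :=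
  hn.dvd_of_dvd_mul_right (choose_two_mul_two k ▸ h.mul_right _)

theorem Prime.dvd_of_pow_dvd_choose_two {p k b : ℕ} (hp : p.Prime) (hpk : p ∣ k)
    (h : p ^ b ∣ k.choose 2) : p ^ b ∣ k := by
  rcases k.eq_zero_or_pos with rfl | hk
  · exact dvd_zero _
  have hp_sub : p.Coprime (k - 1) := by
    refine (hp.coprime_iff_not_dvd).2 fun hpk' => hp.one_lt.ne' (dvd_one.1 ?_)
    simpa [Nat.sub_sub_self hk] using Nat.dvd_sub hpk hpk'
  refine (hp_sub.pow_left b).dvd_of_dvd_mul_right ?_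
  exact choose_two_mul_two k ▸ h.mul_right 2

theorem gcd_choose_two_dvd_three_mul_choose_three (k : ℕ) :
    gcd k (k.choose 2) ∣ 3 * k.choose 3 := by
  rw [mul_comm, choose_three_mul_three]
  exact (gcd_dvd_right _ _).mul_right _

theorem gcd_choose_two_dvd_three_mul_gcd_choose_three (k : ℕ) :
    gcd k (k.choose 2) ∣ 3 * gcd (gcd k (k.choose 2)) (k.choose 3) := by
  rw [← gcd_mul_left]
  exact dvd_gcd (dvd_mul_left _ 3) (gcd_choose_two_dvd_three_mul_choose_three k)

theorem not_gcd_choose_two_dvd_choose_three {k : ℕ} (hk : 0 < k) (h3 : 3 ∣ k) :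
    ¬ gcd k (k.choose 2) ∣ k.choose 3 := by
  intro h
  have := Fact.mk prime_three
  set a := padicValNat 3 k
  have hak : 3 ^ a ∣ k := pow_padicValNat_dvd
  have ha : 3 ^ a ∣ k.choose 3 :=
    (dvd_gcd hak (dvd_choose_two_of_dvd (Coprime.pow_left a (by norm_num)) hak)).trans h
  have ha' : 3 ^ (a + 1) ∣ k.choose 2 * (k - 2) := by
    rw [← choose_three_mul_three, pow_succ]
    exact mul_dvd_mul_right ha 3
  have h3_sub : Coprime 3 (k - 2) := (prime_three.coprime_iff_not_dvd).2 (by omega)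
  exact pow_succ_padicValNat_not_dvd hk.ne'
    (prime_three.dvd_of_pow_dvd_choose_two h3 ((h3_sub.pow_left _).dvd_of_dvd_mul_right ha'))

end Nat

/-- For `k > 0`, with `g₁₂ = gcd(k, C(k,2))` and `g₁₂₃ = gcd(k, C(k,2), C(k,3))`,
the quantity `3·g₁₂₃/g₁₂` is an integer and `gcd(3·g₁₂₃/g₁₂, g₁₂₃) = 1`. -/
theorem three_g123_div_g12_unit (k : ℕ) (hk : 0 < k) :
    Nat.gcd k (k.choose 2) ∣ 3 * Nat.gcd (Nat.gcd k (k.choose 2)) (k.choose 3) ∧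
    Nat.gcd (3 * Nat.gcd (Nat.gcd k (k.choose 2)) (k.choose 3) / Nat.gcd k (k.choose 2))
      (Nat.gcd (Nat.gcd k (k.choose 2)) (k.choose 3)) = 1 := by
  set g := Nat.gcd k (k.choose 2)
  set G := Nat.gcd g (k.choose 3)
  have hdvd : g ∣ 3 * G := Nat.gcd_choose_two_dvd_three_mul_gcd_choose_three k
  refine ⟨hdvd, ?_⟩
  obtain ⟨d, hd⟩ := hdvd
  have hg : 0 < g := Nat.gcd_pos_of_pos_left _ hk
  have hd3 : d ∣ 3 := by
    refine (Nat.mul_dvd_mul_iff_left hg).1 ?_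
    rw [← hd, mul_comm g]
    exact mul_dvd_mul_left 3 (Nat.gcd_dvd_left _ _)
  rw [hd, Nat.mul_div_cancel_left _ hg]
  rcases (Nat.dvd_prime Nat.prime_three).1 hd3 with rfl | rfl
  · exact Nat.gcd_one_left _
  · have hgG : g = G := by omega
    refine (Nat.prime_three.coprime_iff_not_dvd).2 fun h3G => ?_
    have h3k : 3 ∣ k := h3G.trans ((Nat.gcd_dvd_left _ _).trans (Nat.gcd_dvd_left _ _))
    have hg3 : g ∣ k.choose 3 := hgG ▸ Nat.gcd_dvd_right _ _
    exact Nat.not_gcd_choose_two_dvd_choose_three hk h3k hg3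
end

section
/- Let k be a positive integer and for i ≥ 1 let g_{1..i} = gcd(binomial(k,1), …, binomial(k,i)). Then g₁₂ divides (g₁₂₃ / g₁₂₃₄) · binomial(k,4). (Here g₁₂₃/g₁₂₃₄ is an integer since g₁₂₃₄ divides g₁₂₃.) -/
/-- Per-prime key inequality: `min v₁ v₂ ≤ max v₃ v₄` for `p`-adic valuations
of the first four binomial coefficients. -/
lemma key_valuation (k : ℕ) (hk : 4 ≤ k) (p : ℕ) (hp : p.Prime) :
    min ((k.choose 1).factorization p) ((k.choose 2).factorization p) ≤
      max ((k.choose 3).factorization p) ((k.choose 4).factorization p) := by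
  have h1 : k.choose 1 ≠ 0 := Nat.choose_pos (by omega) |>.ne'
  have h2 : k.choose 2 ≠ 0 := Nat.choose_pos (by omega) |>.ne'
  have h3 : k.choose 3 ≠ 0 := Nat.choose_pos (by omega) |>.ne'
  have h4 : k.choose 4 ≠ 0 := Nat.choose_pos (by omega) |>.ne'
  have hk1 : k - 1 ≠ 0 := by omega
  have hk2 : k - 2 ≠ 0 := by omega
  have hk3 : k - 3 ≠ 0 := by omega
  -- the three multiplicative relations
  have e2 : k.choose 2 * 2 = k.choose 1 * (k - 1) := Nat.choose_succ_right_eq k 1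
  have e3 : k.choose 3 * 3 = k.choose 2 * (k - 2) := Nat.choose_succ_right_eq k 2
  have e4 : k.choose 4 * 4 = k.choose 3 * (k - 3) := Nat.choose_succ_right_eq k 3
  have f2 := congrArg (fun f => f p) ((congrArg Nat.factorization e2).trans
    (Nat.factorization_mul h1 hk1) |>.symm.trans (Nat.factorization_mul h2 (by norm_num)) |>.symm)
  have f3 := congrArg (fun f => f p) ((congrArg Nat.factorization e3).trans
    (Nat.factorization_mul h2 hk2) |>.symm.trans (Nat.factorization_mul h3 (by norm_num)) |>.symm)
  have f4 := congrArg (fun f => f p) ((congrArg Nat.factorization e4).trans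
    (Nat.factorization_mul h3 hk3) |>.symm.trans (Nat.factorization_mul h4 (by norm_num)) |>.symm)
  simp only [Finsupp.add_apply] at f2 f3 f4
  set v1 := (k.choose 1).factorization p
  set v2 := (k.choose 2).factorization p
  set v3 := (k.choose 3).factorization p
  set v4 := (k.choose 4).factorization p
  by_cases hp2 : p = 2
  · subst hp2
    have t2 : (2 : ℕ).factorization 2 = 1 := Nat.Prime.factorization_self (by norm_num)
    have t3 : (3 : ℕ).factorization 2 = 0 := by
      apply Nat.factorization_eq_zero_of_not_dvd; norm_num
    have t4 : (4 : ℕ).factorization 2 = 2 := by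
      have : (4 : ℕ) = 2 ^ 2 := by norm_num
      rw [this, Nat.Prime.factorization_pow (by norm_num)]; simp
    rw [t2] at f2; rw [t3] at f3
    by_cases hd : 2 ∣ k
    · have hu : (k - 1).factorization 2 = 0 := by
        apply Nat.factorization_eq_zero_of_not_dvd; omega
      have hw : 1 ≤ (k - 2).factorization 2 := by
        rw [← Nat.Prime.dvd_iff_one_le_factorization (by norm_num) hk2]; omega
      rw [hu] at f2
      omega
    · have hnd : ¬ 2 ∣ k.choose 1 := by rw [Nat.choose_one_right]; exact hd
      have hv1 : v1 = 0 := Nat.factorization_eq_zero_of_not_dvd hnd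
      omega
  · by_cases hp3 : p = 3
    · subst hp3
      have t3 : (3 : ℕ).factorization 3 = 1 := Nat.Prime.factorization_self (by norm_num)
      have t4 : (4 : ℕ).factorization 3 = 0 := by
        apply Nat.factorization_eq_zero_of_not_dvd; norm_num
      rw [t3] at f3; rw [t4] at f4
      by_cases hd : 3 ∣ k
      · by_cases hw : 1 ≤ (k - 2).factorization 3
        · omega
        · have hw3 : 1 ≤ (k - 3).factorization 3 := by
            rw [← Nat.Prime.dvd_iff_one_le_factorization (by norm_num) hk3]; omega
          omega
      · have hnd : ¬ 3 ∣ k.choose 1 := by rw [Nat.choose_one_right]; exact hd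
        have hv1 : v1 = 0 := Nat.factorization_eq_zero_of_not_dvd hnd
        omega
    · have t3 : (3 : ℕ).factorization p = 0 := by
        apply Nat.factorization_eq_zero_of_not_dvd
        intro h
        rcases (Nat.prime_three.eq_one_or_self_of_dvd p h) with h' | h'
        · exact hp.one_lt.ne' h'
        · exact hp3 h'
      rw [t3] at f3
      omega

/-- For `k ≥ 4`, with `g_{1..i} = gcd(C(k,1),…,C(k,i))`, the number `g₁₂` divides
`(g₁₂₃ / g₁₂₃₄) · C(k,4)`.  (Here `g₁₂₃/g₁₂₃₄` is an integer since `g₁₂₃₄ ∣ g₁₂₃`.) -/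
theorem g12_dvd_ratio_mul_choose_four (k : ℕ) (hk : 4 ≤ k) :
    Nat.gcd (k.choose 1) (k.choose 2) ∣
      (Nat.gcd (Nat.gcd (k.choose 1) (k.choose 2)) (k.choose 3) /
        Nat.gcd (Nat.gcd (Nat.gcd (k.choose 1) (k.choose 2)) (k.choose 3)) (k.choose 4)) *
        k.choose 4 := by
  have h1 : k.choose 1 ≠ 0 := Nat.choose_pos (by omega) |>.ne'
  have h2 : k.choose 2 ≠ 0 := Nat.choose_pos (by omega) |>.ne'
  have h3 : k.choose 3 ≠ 0 := Nat.choose_pos (by omega) |>.ne'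
  have h4 : k.choose 4 ≠ 0 := Nat.choose_pos (by omega) |>.ne'
  set G12 := Nat.gcd (k.choose 1) (k.choose 2) with hG12
  set G123 := Nat.gcd G12 (k.choose 3) with hG123
  set G1234 := Nat.gcd G123 (k.choose 4) with hG1234
  have hG12ne : G12 ≠ 0 := Nat.gcd_ne_zero_left h1
  have hG123ne : G123 ≠ 0 := Nat.gcd_ne_zero_left hG12ne
  have hG1234ne : G1234 ≠ 0 := Nat.gcd_ne_zero_left hG123ne
  -- the target equals lcm G123 (choose 4)
  have hkey : (G123 / G1234) * k.choose 4 = Nat.lcm G123 (k.choose 4) := by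
    obtain ⟨m, hm⟩ := Nat.gcd_dvd_left G123 (k.choose 4)
    rw [Nat.lcm, ← hG1234, hm, Nat.mul_div_cancel_left _ (Nat.pos_of_ne_zero hG1234ne),
      mul_assoc, Nat.mul_div_cancel_left _ (Nat.pos_of_ne_zero hG1234ne)]
  rw [hkey]
  have hlcmne : Nat.lcm G123 (k.choose 4) ≠ 0 := Nat.lcm_ne_zero hG123ne h4
  rw [← Nat.factorization_le_iff_dvd hG12ne hlcmne, Finsupp.le_def]
  intro p
  by_cases hp : p.Prime
  · rw [Nat.factorization_lcm hG123ne h4, hG123, Nat.factorization_gcd hG12ne h3,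
      hG12, Nat.factorization_gcd h1 h2]
    simp only [Finsupp.sup_apply, Finsupp.inf_apply]
    have := key_valuation k hk p hp
    omega
  · rw [Nat.factorization_eq_zero_of_not_prime _ hp]
    exact Nat.zero_le _
end

section
/- For every positive integer k, gcd(k, binomial(k+2,2) − 1) = k / gcd(2,k). -/
/-!
Since `2 * (C(k+2,2) - 1) = k * (k + 3)` and exactly one of `k`, `k + 3` is even, the halving
falls on `k` when `k` is even and on `k + 3` when `k` is odd. In the first case the gcd is
`(k / 2) * gcd(2, k + 3) = k / 2`, in the second it is `k` itself.
-/

theorem Nat.two_mul_choose_two_add_two_sub_one (k : ℕ) :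
    2 * ((k + 2).choose 2 - 1) = k * (k + 3) := by
  rw [Nat.mul_sub_one, Nat.choose_two_right, Nat.mul_div_cancel' (Nat.even_mul_pred_self _).two_dvd,
    show k + 2 - 1 = k + 1 by omega]
  ring_nf
  omega

theorem Nat.gcd_eq_div_gcd_two_of_two_mul_eq {k n N : ℕ} (hn : Odd n)
    (h : 2 * N = k * (k + n)) : Nat.gcd k N = k / Nat.gcd 2 k := by
  rcases Nat.even_or_odd' k with ⟨m, rfl | rfl⟩
  · obtain rfl : N = m * (2 * m + n) := by linarith
    have hodd : Nat.Coprime 2 (2 * m + n) :=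
      Nat.coprime_two_left.mpr (by simpa [Nat.odd_add', parity_simps] using hn)
    calc Nat.gcd (2 * m) (m * (2 * m + n)) = m * Nat.gcd 2 (2 * m + n) := by
          rw [← Nat.gcd_mul_left, mul_comm m 2]
      _ = 2 * m / Nat.gcd 2 (2 * m) := by
          rw [hodd, mul_one, Nat.gcd_mul_right_right, Nat.mul_div_cancel_left _ two_pos]
  · obtain ⟨j, hj⟩ : Even (2 * m + 1 + n) := by simpa [Nat.even_add, parity_simps] using hn
    obtain rfl : N = (2 * m + 1) * j := by nlinarith
    rw [Nat.gcd_mul_right_right, Nat.coprime_two_left.mpr (odd_two_mul_add_one m), Nat.div_one]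

theorem cyclic_order_SU3_general (k : ℕ) :
    Nat.gcd k ((k + 2).choose 2 - 1) = k / Nat.gcd 2 k :=
  Nat.gcd_eq_div_gcd_two_of_two_mul_eq (by decide) (Nat.two_mul_choose_two_add_two_sub_one k)

/-- For every positive integer `k`, `gcd(k, C(k+2,2) − 1) = k / gcd(2,k)`.  The left-hand
side is the cyclic order `c(SU(3),k)` of the twisted K-homology of `SU(3)`. -/
theorem cyclic_order_SU3 (k : ℕ) (hk : 0 < k) :
    Nat.gcd k ((k + 2).choose 2 - 1) = k / Nat.gcd 2 k :=
  cyclic_order_SU3_general k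
end

section
/- Let k and n be positive integers with 2n ≤ k, and for i ≥ 1 set g_{1..i} = gcd(binomial(k,1), …, binomial(k,i)). Then g_{1..(2n−2)} divides (g_{1..(2n−1)} / g_{1..2n}) · binomial(k,2n), where g_{1..(2n−1)}/g_{1..2n} is an integer since g_{1..2n} divides g_{1..(2n−1)}. (Assume n ≥ 2.) -/
private lemma key_dvd_aux (k m : ℕ) (hm : 1 ≤ m) (hk : 1 ≤ k) : k ∣ m * k.choose m := by
  have h := Nat.add_one_mul_choose_eq (k - 1) (m - 1)
  rw [Nat.sub_add_cancel hk, Nat.sub_add_cancel hm] at h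
  exact ⟨(k - 1).choose (m - 1), by rw [mul_comm m, ← h]⟩

/-- For positive integers `k`, `n` with `n ≥ 2` and `2n ≤ k`, setting
`g_{1..i} = gcd(C(k,1),…,C(k,i))`, the number `g_{1..(2n−2)}` divides
`(g_{1..(2n−1)} / g_{1..2n}) · C(k,2n)`. -/
theorem spin_key_divisibility (k n : ℕ) (hn : 2 ≤ n) (hk : 2 * n ≤ k) :
    (Finset.Icc 1 (2 * n - 2)).gcd k.choose ∣
      ((Finset.Icc 1 (2 * n - 1)).gcd k.choose / (Finset.Icc 1 (2 * n)).gcd k.choose) *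
        k.choose (2 * n) := by
  have hk0 : k ≠ 0 := by omega
  have e1 : (Finset.Icc 1 (2 * n - 1)).gcd k.choose
      = Nat.gcd (k.choose (2 * n - 1)) ((Finset.Icc 1 (2 * n - 2)).gcd k.choose) := by
    rw [show 2 * n - 1 = (2 * n - 2) + 1 by omega,
      ← Finset.insert_Icc_right_eq_Icc_add_one (by omega : 1 ≤ (2 * n - 2) + 1), Finset.gcd_insert]
    rfl
  have e2 : (Finset.Icc 1 (2 * n)).gcd k.choose
      = Nat.gcd (k.choose (2 * n)) ((Finset.Icc 1 (2 * n - 1)).gcd k.choose) := by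
    rw [show 2 * n = (2 * n - 1) + 1 by omega,
      ← Finset.insert_Icc_right_eq_Icc_add_one (by omega : 1 ≤ (2 * n - 1) + 1), Finset.gcd_insert]
    rfl
  have hX0 : k.choose (2 * n - 1) ≠ 0 := (Nat.choose_pos (by omega)).ne'
  have hY0 : k.choose (2 * n) ≠ 0 := (Nat.choose_pos hk).ne'
  have hAk : (Finset.Icc 1 (2 * n - 2)).gcd k.choose ∣ k := by
    have hmem : (1 : ℕ) ∈ Finset.Icc 1 (2 * n - 2) := by
      rw [Finset.mem_Icc]; omega
    have := Finset.gcd_dvd (f := k.choose) hmem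
    simpa using this
  have hA0 : (Finset.Icc 1 (2 * n - 2)).gcd k.choose ≠ 0 :=
    fun h => hk0 (by simpa [h] using hAk)
  have hBA : (Finset.Icc 1 (2 * n - 1)).gcd k.choose ∣ (Finset.Icc 1 (2 * n - 2)).gcd k.choose := by
    rw [e1]; exact Nat.gcd_dvd_right _ _
  have hB0 : (Finset.Icc 1 (2 * n - 1)).gcd k.choose ≠ 0 :=
    fun h => hA0 (by simpa [h] using hBA)
  have hCB : (Finset.Icc 1 (2 * n)).gcd k.choose ∣ (Finset.Icc 1 (2 * n - 1)).gcd k.choose := by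
    rw [e2]; exact Nat.gcd_dvd_right _ _
  have hC0 : (Finset.Icc 1 (2 * n)).gcd k.choose ≠ 0 :=
    fun h => hB0 (by simpa [h] using hCB)
  have hdiv0 : (Finset.Icc 1 (2 * n - 1)).gcd k.choose / (Finset.Icc 1 (2 * n)).gcd k.choose ≠ 0 :=
    (Nat.div_pos (Nat.le_of_dvd (Nat.pos_of_ne_zero hB0) hCB) (Nat.pos_of_ne_zero hC0)).ne'
  have hcop : Nat.gcd (2 * n - 1) (2 * n) = 1 := by
    have h' : Nat.gcd (2 * n - 1) (2 * n - 1 + 1) = 1 := by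
      rw [Nat.gcd_self_add_right, Nat.gcd_one_right]
    rwa [show 2 * n - 1 + 1 = 2 * n by omega] at h'
  have hk1 : k ∣ (2 * n - 1) * k.choose (2 * n - 1) := key_dvd_aux k (2 * n - 1) (by omega) (by omega)
  have hk2 : k ∣ (2 * n) * k.choose (2 * n) := key_dvd_aux k (2 * n) (by omega) (by omega)
  rw [← Nat.factorization_le_iff_dvd hA0 (mul_ne_zero hdiv0 hY0), Finsupp.le_def]
  intro p
  have hfA : ((Finset.Icc 1 (2 * n - 2)).gcd k.choose).factorization p ≤ k.factorization p :=
    (Nat.factorization_le_iff_dvd hA0 hk0).mpr hAk p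
  have hfB : ((Finset.Icc 1 (2 * n - 1)).gcd k.choose).factorization p
      = min ((k.choose (2 * n - 1)).factorization p)
        (((Finset.Icc 1 (2 * n - 2)).gcd k.choose).factorization p) := by
    rw [e1, Nat.factorization_gcd hX0 hA0]
    simp [Finsupp.inf_apply]
  have hfC : ((Finset.Icc 1 (2 * n)).gcd k.choose).factorization p
      = min ((k.choose (2 * n)).factorization p)
        (((Finset.Icc 1 (2 * n - 1)).gcd k.choose).factorization p) := by
    rw [e2, Nat.factorization_gcd hY0 hB0]
    simp [Finsupp.inf_apply]
  have hmin : min ((2 * n - 1).factorization p) ((2 * n).factorization p) = 0 := by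
    have h := Nat.factorization_gcd (a := 2 * n - 1) (b := 2 * n) (by omega) (by omega)
    rw [hcop] at h
    have := congrArg (fun f => f p) h
    simpa [Finsupp.inf_apply] using this.symm
  have hf1 : k.factorization p ≤ (2 * n - 1).factorization p
      + (k.choose (2 * n - 1)).factorization p := by
    have := (Nat.factorization_le_iff_dvd hk0 (mul_ne_zero (by omega) hX0)).mpr hk1 p
    rwa [Nat.factorization_mul (by omega) hX0, Finsupp.add_apply] at this
  have hf2 : k.factorization p ≤ (2 * n).factorization p
      + (k.choose (2 * n)).factorization p := by
    have := (Nat.factorization_le_iff_dvd hk0 (mul_ne_zero (by omega) hY0)).mpr hk2 p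
    rwa [Nat.factorization_mul (by omega) hY0, Finsupp.add_apply] at this
  rw [Nat.factorization_mul hdiv0 hY0, Finsupp.add_apply, Nat.factorization_div hCB,
    Finsupp.tsub_apply]
  omega
end
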